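/- The squared norm N(a,b,c) = a²+b²+c²−ab−ac−bc is multiplicative for the (3)-vector multiplication: N(x*y) = N(x)·N(y) for all x,y ∈ ℝ³. -/

import Mathlib

def vmul (x y : ℝ × ℝ × ℝ) : ℝ × ℝ × ℝ :=
  (x.1 * y.1 + x.2.1 * y.2.2 + y.2.1 * x.2.2,
   x.1 * y.2.1 + y.1 * x.2.1 + x.2.2 * y.2.2,
   x.1 * y.2.2 + y.1 * x.2.2 + x.2.1 * y.2.1)

def Nrm (x : ℝ × ℝ × ℝ) : ℝ :=
  x.1 ^ 2 + x.2.1 ^ 2 + x.2.2 ^ 2 - x.1 * x.2.1 - x.1 * x.2.2 - x.2.1 * x.2.2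

theorem stmt11 : ∀ x y : ℝ × ℝ × ℝ, Nrm (vmul x y) = Nrm x * Nrm y := by
  intro x y
  simp only [Nrm, vmul]
  ring
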